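/- arXiv:2504.07647 — 2 statements merged into one kernel-verified Lean document; each statement's English description precedes it below -/
import Mathlib

section
/- Let f, g ∈ ℂᴹ be nonzero vectors. Then there exists an M×M complex matrix Θ with Θᵀ = Θ (symmetric), rank(Θ) ≤ 2, and I_M − Θᴴ·Θ positive semidefinite (i.e. ΘᴴΘ ⪯ I_M, a lossy passive surface), such that fᴴ·Θ·g = ‖f‖·‖g‖. -/
/-!
Since `‖f‖ g` and `‖g‖ f` have the same norm, it suffices to find a symmetric contraction of
rank at most two sending `v = ‖f‖ g` to `u = ‖g‖ f`. After rotating `u` by a phase `ν`, the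
vectors `x = ν u` and `y = v̄` have equal norms and a real inner product, so `p = x + y` and
`q = x - y` are orthogonal. The symmetric matrix `Θ₀ = p pᵀ / ‖p‖² - q qᵀ / ‖q‖²` sends
`ȳ = v` to `(p + q) / 2 = x`, and `Θ₀ᴴ Θ₀` is the orthogonal projection onto `span {p̄, q̄}`,
so `Θ₀ᴴ Θ₀ ⪯ 1`. Then `Θ = ν̄ Θ₀` works.
-/

open Matrix
open scoped ComplexOrder

/-- Euclidean norm of a complex vector. -/
noncomputable def euclNorm {m : ℕ} (v : Fin m → ℂ) : ℝ :=
  Real.sqrt (∑ i, Complex.normSq (v i))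

open scoped MatrixOrder

theorem inv_mul_inv_mul_self {G₀ : Type*} [GroupWithZero G₀] (a : G₀) : a⁻¹ * a⁻¹ * a = a⁻¹ := by
  simpa only [inv_inv] using mul_self_mul_inv a⁻¹

theorem RCLike.exists_star_mul_self_eq_one_and_star_mul_eq_norm {𝕜 : Type*} [RCLike 𝕜] (z : 𝕜) :
    ∃ ν : 𝕜, star ν * ν = 1 ∧ star ν * z = ‖z‖ := by
  rcases eq_or_ne z 0 with rfl | hz
  · exact ⟨1, by simp, by simp⟩
  have hz' : (‖z‖ : 𝕜) ≠ 0 := RCLike.ofReal_ne_zero.mpr (norm_ne_zero_iff.mpr hz)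
  have hzz : star z * z = (‖z‖ : 𝕜) ^ 2 := RCLike.conj_mul z
  refine ⟨z / ‖z‖, ?_, ?_⟩
  · rw [star_div₀, RCLike.star_def, RCLike.conj_ofReal, div_mul_div_comm, ← RCLike.star_def, hzz]
    field_simp
  · rw [star_div₀, RCLike.star_def, RCLike.conj_ofReal, div_mul_eq_mul_div, ← RCLike.star_def, hzz]
    field_simp

namespace Matrix

variable {m n K 𝕜 : Type*} [Fintype n]

theorem rank_add_le [Field K] (A B : Matrix m n K) : (A + B).rank ≤ A.rank + B.rank :=
  (Submodule.finrank_mono (by rw [mulVecLin_add]; exact LinearMap.range_add_le _ _)).trans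
    (Submodule.finrank_add_le_finrank_add_finrank _ _)

theorem rank_neg [Field K] (A : Matrix m n K) : (-A).rank = A.rank := by
  rw [← neg_one_smul K A, rank_smul_of_mem_nonZeroDivisors _
    (mem_nonZeroDivisors_of_ne_zero (neg_ne_zero.mpr one_ne_zero))]

theorem rank_sub_le [Field K] (A B : Matrix m n K) : (A - B).rank ≤ A.rank + B.rank := by
  simpa only [sub_eq_add_neg, rank_neg] using rank_add_le A (-B)

variable [RCLike 𝕜]

theorem isSelfAdjoint_star_dotProduct_self (p : n → 𝕜) : IsSelfAdjoint (star p ⬝ᵥ p) :=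
  (star_dotProduct p p).symm

-- By `0⁻¹ = 0`, both definitions vanish at the zero vector, so no lemma needs `w ≠ 0` or `p ≠ 0`.
noncomputable def lineProj (w : n → 𝕜) : Matrix n n 𝕜 := (star w ⬝ᵥ w)⁻¹ • vecMulVec w (star w)

noncomputable def symmOuter (p : n → 𝕜) : Matrix n n 𝕜 := (star p ⬝ᵥ p)⁻¹ • vecMulVec p p

theorem isStarProjection_lineProj (w : n → 𝕜) : IsStarProjection (lineProj w) where
  isSelfAdjoint := by
    rw [IsSelfAdjoint, lineProj, star_eq_conjTranspose, conjTranspose_smul,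
      conjTranspose_vecMulVec, star_star, star_inv₀, (isSelfAdjoint_star_dotProduct_self w).star_eq]
  isIdempotentElem := by
    rw [IsIdempotentElem, lineProj, smul_mul_smul_comm, vecMulVec_mul_vecMulVec, vecMulVec_smul,
      smul_smul, dotProduct_comm, inv_mul_inv_mul_self]

theorem lineProj_mul_lineProj_of_orthogonal {w z : n → 𝕜} (h : star w ⬝ᵥ z = 0) :
    lineProj w * lineProj z = 0 := by
  rw [lineProj, lineProj, smul_mul_smul_comm, vecMulVec_mul_vecMulVec, dotProduct_comm, h,
    zero_smul, vecMulVec_zero, smul_zero]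

theorem transpose_symmOuter (p : n → 𝕜) : (symmOuter p)ᵀ = symmOuter p := by
  rw [symmOuter, transpose_smul, transpose_vecMulVec]

theorem rank_symmOuter_le (p : n → 𝕜) : (symmOuter p).rank ≤ 1 := by
  rw [symmOuter, ← smul_vecMulVec]
  exact rank_vecMulVec_le _ _

theorem rank_symmOuter_sub_symmOuter_le (p q : n → 𝕜) : (symmOuter p - symmOuter q).rank ≤ 2 :=
  (rank_sub_le _ _).trans (add_le_add (rank_symmOuter_le p) (rank_symmOuter_le q))

theorem conjTranspose_symmOuter_mul_symmOuter (p q : n → 𝕜) :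
    (symmOuter p)ᴴ * symmOuter q =
      ((star p ⬝ᵥ p)⁻¹ * (star q ⬝ᵥ q)⁻¹ * (star p ⬝ᵥ q)) • vecMulVec (star p) q := by
  rw [symmOuter, symmOuter, conjTranspose_smul, conjTranspose_vecMulVec, star_inv₀,
    (isSelfAdjoint_star_dotProduct_self p).star_eq, smul_mul_smul_comm, vecMulVec_mul_vecMulVec,
    vecMulVec_smul, smul_smul]

theorem conjTranspose_symmOuter_mul_self (p : n → 𝕜) :
    (symmOuter p)ᴴ * symmOuter p = lineProj (star p) := by
  rw [conjTranspose_symmOuter_mul_symmOuter, inv_mul_inv_mul_self, lineProj, star_star,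
    dotProduct_comm]

theorem posSemidef_one_sub_conjTranspose_mul_self_symmOuter_sub [DecidableEq n] {p q : n → 𝕜}
    (h : star p ⬝ᵥ q = 0) :
    (1 - (symmOuter p - symmOuter q)ᴴ * (symmOuter p - symmOuter q)).PosSemidef := by
  have h' : star q ⬝ᵥ p = 0 := by rw [star_dotProduct, h, star_zero]
  have hPQ : lineProj (star p) * lineProj (star q) = 0 :=
    lineProj_mul_lineProj_of_orthogonal (by rwa [star_star, dotProduct_comm])
  have hΘ : (symmOuter p - symmOuter q)ᴴ * (symmOuter p - symmOuter q) =
      lineProj (star p) + lineProj (star q) := by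
    simp only [conjTranspose_sub, sub_mul, mul_sub, conjTranspose_symmOuter_mul_self,
      conjTranspose_symmOuter_mul_symmOuter, h, h', mul_zero, zero_smul, sub_zero]
    abel
  rw [hΘ]
  exact ((isStarProjection_lineProj _).add (isStarProjection_lineProj _) hPQ).one_sub.nonneg
    |>.posSemidef

theorem symmOuter_mulVec_of_dotProduct_eq {p w : n → 𝕜} {t : 𝕜}
    (h : p ⬝ᵥ w = (star p ⬝ᵥ p) * t) : symmOuter p *ᵥ w = t • p := by
  rcases eq_or_ne p 0 with rfl | hp
  · simp [symmOuter]
  have hpp : star p ⬝ᵥ p ≠ 0 := dotProduct_star_self_eq_zero.not.mpr hp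
  rw [symmOuter, smul_mulVec, vecMulVec_mulVec, op_smul_eq_smul, h, smul_smul,
    inv_mul_cancel_left₀ hpp]

section EqualNorm

variable {x y : n → 𝕜} (hxx : star x ⬝ᵥ x = star y ⬝ᵥ y) (hxy : star x ⬝ᵥ y = star y ⬝ᵥ x)
include hxx hxy

theorem star_add_dotProduct_sub_eq_zero : star (x + y) ⬝ᵥ (x - y) = 0 := by
  simp only [star_add, add_dotProduct, dotProduct_sub, hxx, hxy]
  ring

theorem symmOuter_add_sub_symmOuter_sub_mulVec_star :
    (symmOuter (x + y) - symmOuter (x - y)) *ᵥ star y = x := by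
  have hp : (x + y) ⬝ᵥ star y = (star (x + y) ⬝ᵥ (x + y)) * (1 / 2) := by
    simp only [star_add, add_dotProduct, dotProduct_add, hxx, hxy]
    rw [dotProduct_comm x, dotProduct_comm y]
    ring
  have hq : (x - y) ⬝ᵥ star y = (star (x - y) ⬝ᵥ (x - y)) * (-1 / 2) := by
    simp only [star_sub, sub_dotProduct, dotProduct_sub, hxx, hxy]
    rw [dotProduct_comm x, dotProduct_comm y]
    ring
  rw [sub_mulVec, symmOuter_mulVec_of_dotProduct_eq hp, symmOuter_mulVec_of_dotProduct_eq hq]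
  module

end EqualNorm

theorem exists_symm_rank_two_contraction_mulVec_eq [DecidableEq n] {u v : n → 𝕜}
    (h : star u ⬝ᵥ u = star v ⬝ᵥ v) :
    ∃ Θ : Matrix n n 𝕜, Θᵀ = Θ ∧ Θ.rank ≤ 2 ∧ (1 - Θᴴ * Θ).PosSemidef ∧ Θ *ᵥ v = u := by
  obtain ⟨ν, hν, hνκ⟩ := RCLike.exists_star_mul_self_eq_one_and_star_mul_eq_norm (star u ⬝ᵥ star v)
  have hxx : star (ν • u) ⬝ᵥ (ν • u) = star (star v) ⬝ᵥ star v := by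
    rw [star_smul, smul_dotProduct, dotProduct_smul, smul_smul, hν, one_smul, h, star_star,
      dotProduct_comm]
  have hreal : star (ν • u) ⬝ᵥ star v = ‖star u ⬝ᵥ star v‖ := by
    rw [star_smul, smul_dotProduct, smul_eq_mul, hνκ]
  have hxy : star (ν • u) ⬝ᵥ star v = star (star v) ⬝ᵥ (ν • u) := by
    rw [star_dotProduct (star v), hreal, RCLike.star_def, RCLike.conj_ofReal]
  have hΘ₀ := symmOuter_add_sub_symmOuter_sub_mulVec_star hxx hxy
  rw [star_star] at hΘ₀
  refine ⟨star ν • (symmOuter (ν • u + star v) - symmOuter (ν • u - star v)), ?_, ?_, ?_, ?_⟩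
  · rw [transpose_smul, transpose_sub, transpose_symmOuter, transpose_symmOuter]
  · rw [rank_smul_of_mem_nonZeroDivisors _
      (mem_nonZeroDivisors_of_ne_zero (left_ne_zero_of_mul_eq_one hν))]
    exact rank_symmOuter_sub_symmOuter_le _ _
  · rw [conjTranspose_smul, smul_mul_smul_comm, star_star, mul_comm, hν, one_smul]
    exact posSemidef_one_sub_conjTranspose_mul_self_symmOuter_sub
      (star_add_dotProduct_sub_eq_zero hxx hxy)
  · rw [smul_mulVec, hΘ₀, smul_smul, hν, one_smul]

end Matrix

theorem ofReal_euclNorm_sq {m : ℕ} (v : Fin m → ℂ) : (euclNorm v : ℂ) ^ 2 = star v ⬝ᵥ v := by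
  rw [euclNorm, ← Complex.ofReal_pow,
    Real.sq_sqrt (Finset.sum_nonneg fun i _ => Complex.normSq_nonneg (v i))]
  push_cast
  simp only [dotProduct, Pi.star_apply, RCLike.star_def, Complex.normSq_eq_conj_mul_self]

theorem exists_rank_two_lossy_attaining_general
    {M : ℕ} (f g : Fin M → ℂ) (hf : f ≠ 0) :
    ∃ Θ : Matrix (Fin M) (Fin M) ℂ, Θᵀ = Θ ∧ Θ.rank ≤ 2 ∧
      (1 - Θᴴ * Θ).PosSemidef ∧
      star f ⬝ᵥ (Θ *ᵥ g) = ((euclNorm f * euclNorm g : ℝ) : ℂ) := by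
  have hnf : (euclNorm f : ℂ) ≠ 0 := fun h0 =>
    hf (dotProduct_star_self_eq_zero.mp (by rw [← ofReal_euclNorm_sq, h0, zero_pow two_ne_zero]))
  obtain ⟨Θ, hsymm, hrank, hlossy, hΘ⟩ :=
    exists_symm_rank_two_contraction_mulVec_eq
      (u := (euclNorm g : ℂ) • f) (v := (euclNorm f : ℂ) • g)
      (by simp only [star_smul, smul_dotProduct, dotProduct_smul, smul_eq_mul,
        ← ofReal_euclNorm_sq, Complex.star_def, Complex.conj_ofReal]; ring)
  refine ⟨Θ, hsymm, hrank, hlossy, mul_left_cancel₀ hnf ?_⟩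
  calc (euclNorm f : ℂ) * (star f ⬝ᵥ Θ *ᵥ g) = star f ⬝ᵥ Θ *ᵥ ((euclNorm f : ℂ) • g) := by
        rw [mulVec_smul, dotProduct_smul, smul_eq_mul]
    _ = euclNorm g * (euclNorm f : ℂ) ^ 2 := by
        rw [hΘ, dotProduct_smul, ofReal_euclNorm_sq, smul_eq_mul]
    _ = euclNorm f * ((euclNorm f * euclNorm g : ℝ) : ℂ) := by
        push_cast
        ring

/-- For nonzero `f, g ∈ ℂᴹ` there is a symmetric, rank ≤ 2, lossy passive
matrix `Θ` (i.e. `ΘᴴΘ ⪯ I`) with `fᴴ Θ g = ‖f‖ ‖g‖`. -/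
theorem exists_rank_two_lossy_attaining
    {M : ℕ} (f g : Fin M → ℂ) (hf : f ≠ 0) (hg : g ≠ 0) :
    ∃ Θ : Matrix (Fin M) (Fin M) ℂ, Θᵀ = Θ ∧ Θ.rank ≤ 2 ∧
      (1 - Θᴴ * Θ).PosSemidef ∧
      star f ⬝ᵥ (Θ *ᵥ g) = ((euclNorm f * euclNorm g : ℝ) : ℂ) :=
  exists_rank_two_lossy_attaining_general f g hf
end

section
/- Group-connected BD-RIS: let the index set {1,…,M} be partitioned into G groups, and for g = 1,…,G let f_g, x_g ∈ ℂ^{M_g} denote the sub-vectors of f, x ∈ ℂᴹ corresponding to group g. Consider block-diagonal matrices Θ = blkdiag(Θ₁, …, Θ_G) where each Θ_g is an M_g×M_g complex matrix with Θ_gᵀ = Θ_g and Θ_gᴴΘ_g = I_{M_g}. For every such Θ, |fᴴ·Θ·x| = |Σ_{g=1}^{G} f_gᴴ·Θ_g·x_g| ≤ Σ_{g=1}^{G} ‖f_g‖·‖x_g‖, and the bound Σ_{g=1}^{G} ‖f_g‖·‖x_g‖ is attained by some such block-diagonal Θ (with a suitable symmetric unitary Θ_g for each group with f_g ≠ 0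 and x_g ≠ 0, and the remaining blocks arbitrary unitary symmetric). Hence the maximum of |fᴴΘx| over block-diagonal symmetric unitary Θ equals Σ_g ‖f_g‖·‖x_g‖. -/
open Matrix

namespace BDRIS

lemma euclNorm_nonneg {m : ℕ} (v : Fin m → ℂ) : 0 ≤ euclNorm v := Real.sqrt_nonneg _

lemma euclNorm_eq_norm {m : ℕ} (v : Fin m → ℂ) :
    euclNorm v = ‖(WithLp.equiv 2 (Fin m → ℂ)).symm v‖ := by
  rw [EuclideanSpace.norm_eq]
  simp [euclNorm, Complex.sq_norm]

lemma abs_dot_le {m : ℕ} (v w : Fin m → ℂ) :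
    ‖star v ⬝ᵥ w‖ ≤ euclNorm v * euclNorm w := by
  have h := norm_inner_le_norm (𝕜 := ℂ) ((WithLp.equiv 2 (Fin m → ℂ)).symm v)
      ((WithLp.equiv 2 (Fin m → ℂ)).symm w)
  rw [show inner ℂ ((WithLp.equiv 2 (Fin m → ℂ)).symm v) ((WithLp.equiv 2 (Fin m → ℂ)).symm w) = star v ⬝ᵥ w from dotProduct_comm _ _] at h
  simpa [euclNorm_eq_norm] using h

lemma dot_self {m : ℕ} (v : Fin m → ℂ) :
    star v ⬝ᵥ v = ((euclNorm v ^ 2 : ℝ) : ℂ) := by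
  have h0 : (0:ℝ) ≤ ∑ i, Complex.normSq (v i) :=
    Finset.sum_nonneg fun i _ => Complex.normSq_nonneg _
  rw [euclNorm, Real.sq_sqrt h0]
  push_cast
  simp [dotProduct, Complex.normSq_eq_conj_mul_self]

lemma euclNorm_eq_one {m : ℕ} {v : Fin m → ℂ} (h : star v ⬝ᵥ v = 1) : euclNorm v = 1 := by
  have := dot_self v
  rw [h] at this
  have h2 : (euclNorm v ^ 2 : ℝ) = 1 := by exact_mod_cast this.symm
  nlinarith [euclNorm_nonneg v]

lemma euclNorm_star {m : ℕ} (v : Fin m → ℂ) : euclNorm (star v) = euclNorm v := by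
  simp [euclNorm, Complex.normSq_conj]

lemma dot_eq_zero_of_self {m : ℕ} {v : Fin m → ℂ} (h : star v ⬝ᵥ v = 0) : v = 0 := by
  have := dot_self v
  rw [h] at this
  have h2 : (euclNorm v ^ 2 : ℝ) = 0 := by exact_mod_cast this.symm
  have h3 : euclNorm v = 0 := by nlinarith
  funext i
  have h4 : ∑ i, Complex.normSq (v i) = 0 := by
    have h0 : (0:ℝ) ≤ ∑ i, Complex.normSq (v i) :=
      Finset.sum_nonneg fun i _ => Complex.normSq_nonneg _
    have := Real.sqrt_eq_zero'.mp h3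
    linarith
  have := (Finset.sum_eq_zero_iff_of_nonneg (fun i _ => Complex.normSq_nonneg (v i))).mp h4
  simpa [Complex.normSq_eq_zero] using this i (Finset.mem_univ i)

lemma dot_mulVec_dot {m : ℕ} {V : Matrix (Fin m) (Fin m) ℂ} (hu : Vᴴ * V = 1)
    (v w : Fin m → ℂ) : star (V *ᵥ v) ⬝ᵥ (V *ᵥ w) = star v ⬝ᵥ w := by
  rw [star_mulVec, dotProduct_mulVec, vecMul_vecMul, hu, vecMul_one]

lemma vecMulVec_mulVec' {m : ℕ} (p q w : Fin m → ℂ) :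
    vecMulVec p q *ᵥ w = (q ⬝ᵥ w) • p := by
  funext i
  simp only [mulVec, dotProduct, vecMulVec_apply, Pi.smul_apply, smul_eq_mul, Finset.sum_mul]
  exact Finset.sum_congr rfl fun j _ => by ring

lemma star_dot {m : ℕ} (v w : Fin m → ℂ) :
    (starRingEnd ℂ) (star v ⬝ᵥ w) = star w ⬝ᵥ v := by
  simp only [dotProduct, map_sum, _root_.map_mul, Pi.star_apply, RingHom.coe_coe]
  exact Finset.sum_congr rfl fun j _ => by
    simp [Complex.conj_conj, mul_comm]

set_option maxHeartbeats 1000000 in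
lemma householder {m : ℕ} (u v : Fin m → ℂ)
    (hu : star u ⬝ᵥ u = 1) (hv : star v ⬝ᵥ v = 1) :
    ∃ R : Matrix (Fin m) (Fin m) ℂ, Rᴴ * R = 1 ∧ R *ᵥ u = v ∧
      ∀ w, star (u - v) ⬝ᵥ w = 0 → R *ᵥ w = w := by
  by_cases hp : u - v = 0
  · refine ⟨1, by simp, ?_, fun w _ => by simp⟩
    rw [show u = v from sub_eq_zero.mp hp]
    simp
  set p : Fin m → ℂ := u - v with hpdef
  set γ : ℂ := star p ⬝ᵥ u with hγdef
  have hsum : star p ⬝ᵥ p = γ + (starRingEnd ℂ) γ := by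
    have h1 : star p ⬝ᵥ p = star p ⬝ᵥ u - star p ⬝ᵥ v := by
      rw [hpdef, dotProduct_sub]
    have h2 : (starRingEnd ℂ) γ = star u ⬝ᵥ p := by rw [hγdef, star_dot]
    have h3 : star u ⬝ᵥ p = 1 - star u ⬝ᵥ v := by
      rw [hpdef, dotProduct_sub, hu]
    have h4 : star p ⬝ᵥ v = star u ⬝ᵥ v - 1 := by
      rw [hpdef, show star (u - v) = star u - star v by rw [star_sub],
        sub_dotProduct, hv]
    rw [h1, h4, h2, h3]
    ring
  have hγ : γ ≠ 0 := by
    intro h0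
    apply hp
    apply dot_eq_zero_of_self
    rw [hsum, h0]
    simp
  set M : Matrix (Fin m) (Fin m) ℂ := vecMulVec p (star p) with hM
  have hMherm : Mᴴ = M := by
    funext i j
    simp [hM, conjTranspose_apply, vecMulVec_apply, mul_comm]
  have hMM : M * M = (γ + (starRingEnd ℂ) γ) • M := by
    rw [← hsum]
    funext i j
    simp only [hM, Matrix.mul_apply, vecMulVec_apply, Matrix.smul_apply, smul_eq_mul,
      dotProduct]
    rw [Finset.sum_mul]
    exact Finset.sum_congr rfl fun k _ => by simp [Pi.star_apply]; ring
  refine ⟨1 - γ⁻¹ • M, ?_, ?_, ?_⟩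
  · have hRH : (1 - γ⁻¹ • M)ᴴ = 1 - ((starRingEnd ℂ) γ)⁻¹ • M := by
      rw [conjTranspose_sub, conjTranspose_smul, hMherm, conjTranspose_one]
      norm_num [map_inv₀]
    rw [hRH]
    have expand : (1 - ((starRingEnd ℂ) γ)⁻¹ • M) * (1 - γ⁻¹ • M)
        = 1 - γ⁻¹ • M - ((starRingEnd ℂ) γ)⁻¹ • M
          + (γ⁻¹ * ((starRingEnd ℂ) γ)⁻¹) • (M * M) := by
      simp only [mul_sub, sub_mul, one_mul, mul_one, Matrix.smul_mul, Matrix.mul_smul,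
        smul_smul]
      abel
    have hcγ : (starRingEnd ℂ) γ ≠ 0 := by simpa using hγ
    have hco : γ⁻¹ * ((starRingEnd ℂ) γ)⁻¹ * (γ + (starRingEnd ℂ) γ)
        = γ⁻¹ + ((starRingEnd ℂ) γ)⁻¹ := by
      field_simp
      ring
    rw [expand, hMM, smul_smul, hco, add_smul]
    abel
  · rw [sub_mulVec, one_mulVec, smul_mulVec, hM, vecMulVec_mulVec', ← hγdef, smul_smul,
      inv_mul_cancel₀ hγ, one_smul, hpdef]
    abel
  · intro w hw
    rw [sub_mulVec, one_mulVec, smul_mulVec, hM, vecMulVec_mulVec', ← hpdef] at *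
    rw [hw, zero_smul, smul_zero, sub_zero]
lemma z_exists {m : ℕ} (hm : m ≠ 0) {σ : ℝ} (hσ0 : 0 ≤ σ) (hσ1 : σ ≤ 1)
    (hm1 : m = 1 → σ = 1) (c : ℂ) (hc : Complex.normSq c = 1) :
    ∃ z : Fin m → ℂ, star z ⬝ᵥ z = 1 ∧ z ⬝ᵥ z = c ^ 2 * (σ : ℂ) := by
  have hcc : (starRingEnd ℂ) c * c = 1 := by
    rw [← Complex.normSq_eq_conj_mul_self, hc]
    norm_num
  have hs1 : ((Real.sqrt ((1+σ)/2) : ℂ)) ^ 2 = (((1+σ)/2 : ℝ) : ℂ) := by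
    rw [← Complex.ofReal_pow, Real.sq_sqrt (by linarith)]
  have hs2 : ((Real.sqrt ((1-σ)/2) : ℂ)) ^ 2 = (((1-σ)/2 : ℝ) : ℂ) := by
    rw [← Complex.ofReal_pow, Real.sq_sqrt (by linarith)]
  push_cast at hs1 hs2
  cases m with
  | zero => exact absurd rfl hm
  | succ m' =>
    cases m' with
    | zero =>
      have hσ : σ = 1 := hm1 rfl
      refine ⟨fun _ => c, ?_, ?_⟩
      · simpa [dotProduct] using hcc
      · subst hσ
        show ∑ i : Fin 1, c * c = _
        rw [Fin.sum_univ_one]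
        push_cast
        ring
    | succ k =>
      refine ⟨Fin.cons (c * Real.sqrt ((1+σ)/2))
          (Fin.cons (c * Complex.I * Real.sqrt ((1-σ)/2)) 0), ?_, ?_⟩
      · rw [dotProduct, Fin.sum_univ_succ, Fin.sum_univ_succ]
        simp only [Pi.star_apply, Fin.cons_zero, Fin.cons_succ, Pi.zero_apply, star_zero,
          zero_mul, Finset.sum_const_zero, add_zero, _root_.map_mul, Complex.conj_ofReal,
          Complex.conj_I, RCLike.star_def]
        linear_combination ((Real.sqrt ((1+σ)/2) : ℂ)^2 + (Real.sqrt ((1-σ)/2) : ℂ)^2) * hcc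
          + hs1 + hs2
          - ((starRingEnd ℂ) c * c * (Real.sqrt ((1-σ)/2) : ℂ)^2) * Complex.I_sq
      · rw [dotProduct, Fin.sum_univ_succ, Fin.sum_univ_succ]
        simp only [Fin.cons_zero, Fin.cons_succ, Pi.zero_apply, zero_mul,
          Finset.sum_const_zero, add_zero]
        linear_combination c^2*hs1 + c^2*Complex.I^2*hs2 + c^2*((1-(σ:ℂ))/2)*Complex.I_sq

lemma euclNorm_zero {m : ℕ} : euclNorm (0 : Fin m → ℂ) = 0 := by simp [euclNorm]

lemma key {m : ℕ} (f x : Fin m → ℂ) :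
    ∃ Θ : Matrix (Fin m) (Fin m) ℂ, Θᵀ = Θ ∧ Θᴴ * Θ = 1 ∧
      star f ⬝ᵥ (Θ *ᵥ x) = ((euclNorm f * euclNorm x : ℝ) : ℂ) := by
  by_cases hf : f = 0
  · exact ⟨1, by simp, by simp, by simp [hf, euclNorm_zero]⟩
  by_cases hx : x = 0
  · exact ⟨1, by simp, by simp, by simp [hx, euclNorm_zero]⟩
  have hm : m ≠ 0 := by
    intro h
    subst h
    exact hx (funext fun i => i.elim0)
  have hF0 : euclNorm f ≠ 0 := by
    intro h
    exact hf (dot_eq_zero_of_self (by rw [dot_self, h]; norm_num))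
  have hX0 : euclNorm x ≠ 0 := by
    intro h
    exact hx (dot_eq_zero_of_self (by rw [dot_self, h]; norm_num))
  set F : ℝ := euclNorm f with hFdef
  set X : ℝ := euclNorm x with hXdef
  set u : Fin m → ℂ := ((F⁻¹ : ℝ) : ℂ) • f with hudef
  set a : Fin m → ℂ := ((X⁻¹ : ℝ) : ℂ) • x with hadef
  have hCF : ((F : ℝ) : ℂ) ≠ 0 := by exact_mod_cast hF0
  have hCX : ((X : ℝ) : ℂ) ≠ 0 := by exact_mod_cast hX0
  have hu : star u ⬝ᵥ u = 1 := by
    have h1 : star u ⬝ᵥ u = ((F⁻¹ : ℝ) : ℂ) * (((F⁻¹ : ℝ) : ℂ) * (star f ⬝ᵥ f)) := by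
      rw [hudef, star_smul, smul_dotProduct, dotProduct_smul]
      simp [Complex.conj_ofReal]
    rw [h1, dot_self f, ← hFdef]
    push_cast
    field_simp
  have ha : star a ⬝ᵥ a = 1 := by
    have h1 : star a ⬝ᵥ a = ((X⁻¹ : ℝ) : ℂ) * (((X⁻¹ : ℝ) : ℂ) * (star x ⬝ᵥ x)) := by
      rw [hadef, star_smul, smul_dotProduct, dotProduct_smul]
      simp [Complex.conj_ofReal]
    rw [h1, dot_self x, ← hXdef]
    push_cast
    field_simp
  set τ : ℂ := u ⬝ᵥ a with hτdef
  have hτ1 : ‖τ‖ ≤ 1 := by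
    have h1 : τ = star (star u) ⬝ᵥ a := by rw [star_star]
    calc ‖τ‖ ≤ euclNorm (star u) * euclNorm a := by
          rw [h1]; exact abs_dot_le _ _
      _ = 1 := by
          rw [euclNorm_star, euclNorm_eq_one hu, euclNorm_eq_one ha]; norm_num
  set σ : ℝ := ‖τ‖ with hσdef
  have hσ0 : (0:ℝ) ≤ σ := norm_nonneg _
  have hm1 : m = 1 → σ = 1 := by
    intro h
    subst h
    have h1 : (Complex.normSq (u 0) : ℂ) = 1 := by
      rw [← hu]
      simp [dotProduct, Complex.normSq_eq_conj_mul_self]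
    have h2 : (Complex.normSq (a 0) : ℂ) = 1 := by
      rw [← ha]
      simp [dotProduct, Complex.normSq_eq_conj_mul_self]
    have h1' : ‖u 0‖ = 1 := by
      have : Complex.normSq (u 0) = 1 := by exact_mod_cast h1
      have := Complex.sq_norm (u 0)
      nlinarith [norm_nonneg (u 0)]
    have h2' : ‖a 0‖ = 1 := by
      have : Complex.normSq (a 0) = 1 := by exact_mod_cast h2
      have := Complex.sq_norm (a 0)
      nlinarith [norm_nonneg (a 0)]
    have hτ0 : τ = u 0 * a 0 := by
      rw [hτdef, dotProduct, Fin.sum_univ_one]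
    rw [hσdef, hτ0, norm_mul, h1', h2', mul_one]
  set b : Fin m → ℂ := star u with hbdef
  have hb : star b ⬝ᵥ b = 1 := by
    rw [hbdef, star_star, dotProduct_comm]
    exact hu
  set c : ℂ := Complex.exp ((Complex.arg τ / 2 : ℝ) * Complex.I) with hcdef
  have hc : Complex.normSq c = 1 := by
    have := Complex.norm_exp_ofReal_mul_I (Complex.arg τ / 2)
    rw [hcdef, Complex.normSq_eq_norm_sq, this]
    norm_num
  have hc2 : c ^ 2 * (σ : ℂ) = τ := by
    have h1 : c ^ 2 = Complex.exp ((Complex.arg τ : ℝ) * Complex.I) := by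
      rw [hcdef, sq, ← Complex.exp_add]
      congr 1
      push_cast
      ring
    rw [h1, hσdef, mul_comm]
    exact Complex.norm_mul_exp_arg_mul_I τ
  obtain ⟨z, hz1, hz2⟩ := z_exists hm hσ0 hτ1 hm1 c hc
  have hzz : z ⬝ᵥ z = τ := by rw [hz2, hc2]
  obtain ⟨V₁, hV₁unit, hV₁a, hV₁fix⟩ := householder a z ha hz1
  set b' : Fin m → ℂ := V₁ *ᵥ b with hb'def
  have hb' : star b' ⬝ᵥ b' = 1 := by rw [hb'def, dot_mulVec_dot hV₁unit]; exact hb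
  have hz' : star (star z) ⬝ᵥ (star z) = 1 := by
    rw [star_star, dotProduct_comm]
    exact hz1
  obtain ⟨V₂, hV₂unit, hV₂b', hV₂fix⟩ := householder b' (star z) hb' hz'
  have hfixz : V₂ *ᵥ z = z := by
    apply hV₂fix
    have h1 : star (b' - star z) ⬝ᵥ z = star b' ⬝ᵥ z - star (star z) ⬝ᵥ z := by
      rw [star_sub, sub_dotProduct]
    have h2 : star b' ⬝ᵥ z = τ := by
      rw [hb'def, ← hV₁a, dot_mulVec_dot hV₁unit, hbdef, star_star, hτdef]
    have h3 : star (star z) ⬝ᵥ z = τ := by rw [star_star, hzz]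
    rw [h1, h2, h3, sub_self]
  set V : Matrix (Fin m) (Fin m) ℂ := V₂ * V₁ with hVdef
  have hVunit : Vᴴ * V = 1 := by
    rw [hVdef, conjTranspose_mul, mul_assoc, ← mul_assoc V₂ᴴ, hV₂unit, one_mul, hV₁unit]
  have hVa : V *ᵥ a = z := by
    rw [hVdef, ← mulVec_mulVec, hV₁a, hfixz]
  have hVb : V *ᵥ b = star z := by
    rw [hVdef, ← mulVec_mulVec, ← hb'def, hV₂b']
  refine ⟨Vᵀ * V, ?_, ?_, ?_⟩
  · rw [transpose_mul, transpose_transpose]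
  · have hVVH : V * Vᴴ = 1 := mul_eq_one_comm.mp hVunit
    have hTT : (Vᵀ)ᴴ = (Vᴴ)ᵀ := by
      funext i j
      simp [conjTranspose_apply, transpose_apply]
    have h1 : (Vᵀ)ᴴ * Vᵀ = 1 := by
      rw [hTT, ← transpose_mul, hVVH, transpose_one]
    rw [conjTranspose_mul, mul_assoc, ← mul_assoc ((Vᵀ)ᴴ), h1, one_mul, hVunit]
  · have hval : star u ⬝ᵥ ((Vᵀ * V) *ᵥ a) = 1 := by
      rw [← mulVec_mulVec, hVa, dotProduct_mulVec, vecMul_transpose, ← hbdef, hVb, hz1]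
    have hexp : star u ⬝ᵥ ((Vᵀ * V) *ᵥ a)
        = ((F⁻¹ : ℝ) : ℂ) * (((X⁻¹ : ℝ) : ℂ) * (star f ⬝ᵥ ((Vᵀ * V) *ᵥ x))) := by
      rw [hudef, hadef, star_smul, smul_dotProduct, mulVec_smul, dotProduct_smul]
      simp [Complex.conj_ofReal]
    rw [hexp] at hval
    have : star f ⬝ᵥ ((Vᵀ * V) *ᵥ x) = (F : ℂ) * (X : ℂ) := by
      push_cast at hval
      field_simp at hval
      linear_combination hval
    rw [this]
    push_cast
    ring
lemma euclNorm_mulVec {m : ℕ} {V : Matrix (Fin m) (Fin m) ℂ} (hu : Vᴴ * V = 1)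
    (v : Fin m → ℂ) : euclNorm (V *ᵥ v) = euclNorm v := by
  have h := dot_mulVec_dot hu v v
  rw [dot_self, dot_self] at h
  have h2 : (euclNorm (V *ᵥ v))^2 = (euclNorm v)^2 := by exact_mod_cast h
  nlinarith [euclNorm_nonneg (V *ᵥ v), euclNorm_nonneg v]

lemma decomp {G : ℕ} {Msz : Fin G → ℕ} (Θ : ∀ g, Matrix (Fin (Msz g)) (Fin (Msz g)) ℂ)
    (f x : (Σ g : Fin G, Fin (Msz g)) → ℂ) :
    star f ⬝ᵥ (blockDiagonal' Θ *ᵥ x)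
      = ∑ g : Fin G, star (fun j => f ⟨g, j⟩) ⬝ᵥ (Θ g *ᵥ fun j => x ⟨g, j⟩) := by
  have hblock : ∀ (g : Fin G) (j : Fin (Msz g)),
      (blockDiagonal' Θ *ᵥ x) ⟨g, j⟩ = (Θ g *ᵥ fun j' => x ⟨g, j'⟩) j := by
    intro g j
    show (blockDiagonal' Θ) ⟨g, j⟩ ⬝ᵥ x = (Θ g) j ⬝ᵥ (fun j' => x ⟨g, j'⟩)
    rw [dotProduct, dotProduct, ← Finset.univ_sigma_univ, Finset.sum_sigma]
    rw [Finset.sum_eq_single g]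
    · exact Finset.sum_congr rfl fun j' _ => by rw [blockDiagonal'_apply_eq]
    · intro g' _ hg'
      apply Finset.sum_eq_zero
      intro j' _
      rw [blockDiagonal'_apply_ne _ _ _ (Ne.symm hg'), zero_mul]
    · intro h
      exact absurd (Finset.mem_univ g) h
  rw [dotProduct, ← Finset.univ_sigma_univ, Finset.sum_sigma]
  refine Finset.sum_congr rfl fun g _ => ?_
  rw [dotProduct]
  refine Finset.sum_congr rfl fun j _ => ?_
  rw [hblock g j]
  rfl

lemma bound {G : ℕ} {Msz : Fin G → ℕ} (Θ : ∀ g, Matrix (Fin (Msz g)) (Fin (Msz g)) ℂ)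
    (hunit : ∀ g, (Θ g)ᴴ * Θ g = 1)
    (f x : (Σ g : Fin G, Fin (Msz g)) → ℂ) :
    ‖star f ⬝ᵥ (blockDiagonal' Θ *ᵥ x)‖
      ≤ ∑ g : Fin G, euclNorm (fun j => f ⟨g, j⟩) * euclNorm (fun j => x ⟨g, j⟩) := by
  rw [decomp]
  calc ‖∑ g : Fin G, star (fun j => f ⟨g, j⟩) ⬝ᵥ (Θ g *ᵥ fun j => x ⟨g, j⟩)‖
      ≤ ∑ g : Fin G, ‖star (fun j => f ⟨g, j⟩) ⬝ᵥ (Θ g *ᵥ fun j => x ⟨g, j⟩)‖ :=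
        norm_sum_le _ _
    _ ≤ ∑ g : Fin G, euclNorm (fun j => f ⟨g, j⟩) * euclNorm (fun j => x ⟨g, j⟩) := by
        refine Finset.sum_le_sum fun g _ => ?_
        calc ‖star (fun j => f ⟨g, j⟩) ⬝ᵥ (Θ g *ᵥ fun j => x ⟨g, j⟩)‖
            ≤ euclNorm (fun j => f ⟨g, j⟩) * euclNorm (Θ g *ᵥ fun j => x ⟨g, j⟩) :=
              abs_dot_le _ _
          _ = euclNorm (fun j => f ⟨g, j⟩) * euclNorm (fun j => x ⟨g, j⟩) := by
              rw [euclNorm_mulVec (hunit g)]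

end BDRIS

open BDRIS in
/-- Group-connected BD-RIS: for block-diagonal `Θ = blkdiag(Θ₁,…,Θ_G)` with
each block symmetric and unitary, the gain decomposes as
`fᴴΘx = Σ_g f_gᴴ Θ_g x_g` and `|fᴴΘx| ≤ Σ_g ‖f_g‖‖x_g‖`; the bound is
attained, so the maximum over block-diagonal symmetric unitary matrices
equals `Σ_g ‖f_g‖‖x_g‖`. -/
theorem group_connected_BD_RIS_max
    {G : ℕ} (Msz : Fin G → ℕ)
    (f x : (Σ g : Fin G, Fin (Msz g)) → ℂ) :
    (∀ Θ : ∀ g : Fin G, Matrix (Fin (Msz g)) (Fin (Msz g)) ℂ,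
      (∀ g, (Θ g)ᵀ = Θ g) → (∀ g, (Θ g)ᴴ * Θ g = 1) →
      (star f ⬝ᵥ ((Matrix.blockDiagonal' Θ) *ᵥ x)
          = ∑ g : Fin G,
              star (fun j => f ⟨g, j⟩) ⬝ᵥ ((Θ g) *ᵥ (fun j => x ⟨g, j⟩))) ∧
      ‖star f ⬝ᵥ ((Matrix.blockDiagonal' Θ) *ᵥ x)‖
        ≤ ∑ g : Fin G,
            euclNorm (fun j => f ⟨g, j⟩) * euclNorm (fun j => x ⟨g, j⟩)) ∧
    IsGreatest {r : ℝ | ∃ Θ : ∀ g : Fin G, Matrix (Fin (Msz g)) (Fin (Msz g)) ℂ,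
        (∀ g, (Θ g)ᵀ = Θ g) ∧ (∀ g, (Θ g)ᴴ * Θ g = 1) ∧
        r = ‖star f ⬝ᵥ ((Matrix.blockDiagonal' Θ) *ᵥ x)‖}
      (∑ g : Fin G,
        euclNorm (fun j => f ⟨g, j⟩) * euclNorm (fun j => x ⟨g, j⟩)) := by
  refine ⟨fun Θ hsym hunit => ⟨decomp Θ f x, bound Θ hunit f x⟩, ?_, ?_⟩
  · -- membership
    choose Θ hsym hunit hval using fun g => key (fun j => f ⟨g, j⟩) (fun j => x ⟨g, j⟩)
    refine ⟨Θ, hsym, hunit, ?_⟩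
    rw [decomp Θ f x]
    have h1 : ∑ g : Fin G, star (fun j => f ⟨g, j⟩) ⬝ᵥ (Θ g *ᵥ fun j => x ⟨g, j⟩)
        = ((∑ g : Fin G, euclNorm (fun j => f ⟨g, j⟩) * euclNorm (fun j => x ⟨g, j⟩) : ℝ) : ℂ) := by
      rw [Complex.ofReal_sum]
      exact Finset.sum_congr rfl fun g _ => hval g
    rw [h1, Complex.norm_real, Real.norm_of_nonneg]
    exact Finset.sum_nonneg fun g _ => mul_nonneg (euclNorm_nonneg _) (euclNorm_nonneg _)
  · rintro r ⟨Θ, hsym, hunit, rfl⟩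
    exact bound Θ hunit f x
end
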